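/- arXiv:1103.1829 — 2 statements merged into one kernel-verified Lean document; each statement's English description precedes it below -/
import Mathlib

section
/- Let 𝓜 = {M₁,…,Mₙ} be a finite set of real square matrices such that M₁ has maximal spectral norm among the M_i (‖M₁‖₂ = max_i ‖M_i‖₂) and the transpose M₁ᵀ also belongs to 𝓜. Then the generalized spectral radius of 𝓜 equals ‖M₁‖₂ = ρ(M₁ M₁ᵀ)^{1/2}, and it is attained at level k = 2, i.e. ρ(𝓜) = ρ₂(𝓜). -/
open Matrix BigOperators Filter

/-- The spectral radius of a real square matrix: supremum of moduli of complex eigenvalues. -/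
noncomputable def specRad {d : ℕ} (M : Matrix (Fin d) (Fin d) ℝ) : ℝ :=
  sSup ((fun z : ℂ => ‖z‖) '' spectrum ℂ (M.map Complex.ofReal))

/-- `rhoK A k` = max over products of `k` matrices from the family `A` of the `k`-th root
of the spectral radius of the product. -/
noncomputable def rhoK {d n : ℕ} (A : Fin n → Matrix (Fin d) (Fin d) ℝ) (k : ℕ) : ℝ :=
  ⨆ f : Fin k → Fin n, specRad ((List.ofFn fun i => A (f i)).prod) ^ ((1 : ℝ) / (k : ℝ))

/-!
Write `‖M‖` for the ℓ²-operator norm of the complexification of `M`. The C⋆-identity gives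
`ρ(M Mᵀ) = ‖M‖²`, so the hypothesis says that `‖A i₀‖` bounds every `‖A i‖`, and by
submultiplicativity the spectral radius of any product of `k ≥ 1` factors is at most `‖A i₀‖ ^ k`:
`ρ_k ≤ ‖A i₀‖`. Conversely, as `A i₀ᵀ` is in the family, the alternating product of length `2m`
is `(A i₀ A i₀ᵀ) ^ m`, whose spectral radius is at least `ρ(A i₀ A i₀ᵀ) ^ m = ‖A i₀‖ ^ (2m)`.
Hence `ρ_{2m} = ‖A i₀‖` for all `m ≥ 1`, which pins down the limsup.
-/

lemma Filter.limsup_eq_of_eventually_le_of_frequently_ge {ι α : Type*}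
    [ConditionallyCompleteLinearOrder α] {f : Filter ι} {u : ι → α} {a : α}
    (hle : ∀ᶠ i in f, u i ≤ a) (hge : ∃ᶠ i in f, a ≤ u i) : limsup u f = a :=
  le_antisymm (limsup_le_of_le (.of_frequently_ge hge) hle)
    (le_limsup_of_frequently_le hge ⟨a, hle⟩)

open scoped Matrix.Norms.L2Operator

section SpectralRadius

variable {d : ℕ}

noncomputable abbrev complexify : Matrix (Fin d) (Fin d) ℝ →+* Matrix (Fin d) (Fin d) ℂ :=
  Complex.ofRealHom.mapMatrix

lemma complexify_transpose (M : Matrix (Fin d) (Fin d) ℝ) :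
    complexify Mᵀ = (complexify M)ᴴ := by
  ext i j
  simp

lemma specRad_eq_toReal_spectralRadius (M : Matrix (Fin d) (Fin d) ℝ) :
    specRad M = (spectralRadius ℂ (complexify M)).toReal := by
  rw [spectralRadius, ← sSup_image, ENNReal.toReal_sSup _ (by simp), Set.image_image]
  rfl

lemma specRad_nonneg (M : Matrix (Fin d) (Fin d) ℝ) : 0 ≤ specRad M :=
  specRad_eq_toReal_spectralRadius M ▸ ENNReal.toReal_nonneg

lemma spectralRadius_complexify_le_nnnorm (M : Matrix (Fin d) (Fin d) ℝ) :
    spectralRadius ℂ (complexify M) ≤ ‖complexify M‖₊ := by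
  rcases isEmpty_or_nonempty (Fin d) with _ | _
  · simp [spectralRadius, spectrum.of_subsingleton]
  · exact spectrum.spectralRadius_le_nnnorm _

lemma specRad_le_norm (M : Matrix (Fin d) (Fin d) ℝ) : specRad M ≤ ‖complexify M‖ := by
  rw [specRad_eq_toReal_spectralRadius]
  exact ENNReal.toReal_mono ENNReal.coe_ne_top (spectralRadius_complexify_le_nnnorm M)

lemma specRad_mul_transpose (M : Matrix (Fin d) (Fin d) ℝ) :
    specRad (M * Mᵀ) = ‖complexify M‖ ^ 2 := by
  rw [specRad_eq_toReal_spectralRadius, map_mul, complexify_transpose]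
  exact CStarAlgebra.toReal_spectralRadius_self_mul_star_eq_norm_sq _

lemma specRad_pow_le (M : Matrix (Fin d) (Fin d) ℝ) {m : ℕ} (hm : m ≠ 0) :
    specRad M ^ m ≤ specRad (M ^ m) := by
  have hfin := ((spectralRadius_complexify_le_nnnorm (M ^ m)).trans_lt ENNReal.coe_lt_top).ne
  rw [specRad_eq_toReal_spectralRadius, specRad_eq_toReal_spectralRadius, ← ENNReal.toReal_pow]
  rw [map_pow] at hfin ⊢
  exact ENNReal.toReal_mono hfin (spectrum.spectralRadius_pow_le _ m hm)

lemma specRad_prod_ofFn_le {k : ℕ} (hk : k ≠ 0) {g : Fin k → Matrix (Fin d) (Fin d) ℝ} {r : ℝ}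
    (hg : ∀ i, ‖complexify (g i)‖ ≤ r) : specRad (List.ofFn g).prod ≤ r ^ k :=
  calc specRad (List.ofFn g).prod
      ≤ ‖(List.ofFn fun i => complexify (g i)).prod‖ := by
        rw [← Function.comp_def, ← List.map_ofFn, ← map_list_prod]; exact specRad_le_norm _
    _ ≤ ∏ i, ‖complexify (g i)‖ := by
        refine (List.norm_prod_le' (by simpa using hk)).trans_eq ?_
        rw [List.map_ofFn, List.prod_ofFn]; rfl
    _ ≤ r ^ k := by
        simpa using
          Finset.prod_le_prod (s := Finset.univ) (fun i _ => norm_nonneg _) (fun i _ => hg i)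

end SpectralRadius

section JointSpectralRadius

variable {d n : ℕ} (A : Fin n → Matrix (Fin d) (Fin d) ℝ)

lemma rhoK_le_of_forall_norm_le {r : ℝ} (hr : 0 ≤ r) (hA : ∀ i, ‖complexify (A i)‖ ≤ r)
    {k : ℕ} (hk : k ≠ 0) : rhoK A k ≤ r := by
  refine Real.iSup_le (fun f => ?_) hr
  calc specRad (List.ofFn fun i => A (f i)).prod ^ (1 / k : ℝ)
      ≤ (r ^ k) ^ (k⁻¹ : ℝ) := by
        rw [one_div]
        exact Real.rpow_le_rpow (specRad_nonneg _) (specRad_prod_ofFn_le hk fun i => hA (f i))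
          (by positivity)
    _ = r := Real.pow_rpow_inv_natCast hr hk

lemma specRad_prod_map_le_rhoK (L : List (Fin n)) :
    specRad (L.map A).prod ^ (1 / L.length : ℝ) ≤ rhoK A L.length := by
  have h := le_ciSup (Set.finite_range fun f : Fin L.length → Fin n =>
    specRad ((List.ofFn fun i => A (f i)).prod) ^ (1 / L.length : ℝ)).bddAbove L.get
  simpa [rhoK, List.ofFn_getElem_eq_map] using h

lemma norm_le_rhoK_two_mul {i j : Fin n} (hj : A j = (A i)ᵀ) {m : ℕ} (hm : m ≠ 0) :
    ‖complexify (A i)‖ ≤ rhoK A (2 * m) := by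
  set L := (List.replicate m [i, j]).flatten
  have hlen : L.length = 2 * m := by simp [L, mul_comm]
  have hprod : (L.map A).prod = (A i * (A i)ᵀ) ^ m := by
    simp [L, List.map_flatten, List.prod_flatten, hj]
  have h2m : 2 * m ≠ 0 := by positivity
  calc ‖complexify (A i)‖
      = ((‖complexify (A i)‖ ^ 2) ^ m) ^ ((2 * m : ℕ)⁻¹ : ℝ) := by
        rw [← pow_mul, Real.pow_rpow_inv_natCast (norm_nonneg _) h2m]
    _ ≤ specRad ((A i * (A i)ᵀ) ^ m) ^ ((2 * m : ℕ)⁻¹ : ℝ) := by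
        rw [← specRad_mul_transpose]
        exact Real.rpow_le_rpow (pow_nonneg (specRad_nonneg _) _) (specRad_pow_le _ hm)
          (by positivity)
    _ ≤ rhoK A (2 * m) := by
        simpa [hlen, hprod] using specRad_prod_map_le_rhoK A L

end JointSpectralRadius

theorem stmt_5_general (d n : ℕ)
    (A : Fin n → Matrix (Fin d) (Fin d) ℝ) (i₀ : Fin n)
    (hmax : ∀ i, Real.sqrt (specRad (A i * (A i)ᵀ)) ≤ Real.sqrt (specRad (A i₀ * (A i₀)ᵀ)))
    (htrans : ∃ j, A j = (A i₀)ᵀ) :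
    Filter.limsup (rhoK A) Filter.atTop = Real.sqrt (specRad (A i₀ * (A i₀)ᵀ)) ∧
    Filter.limsup (rhoK A) Filter.atTop = rhoK A 2 := by
  obtain ⟨j, hj⟩ := htrans
  simp only [specRad_mul_transpose, Real.sqrt_sq (norm_nonneg _)] at hmax ⊢
  have hle : ∀ k ≠ 0, rhoK A k ≤ ‖complexify (A i₀)‖ := fun k hk =>
    rhoK_le_of_forall_norm_le A (norm_nonneg _) hmax hk
  have hge : ∀ m ≠ 0, ‖complexify (A i₀)‖ ≤ rhoK A (2 * m) := fun m hm =>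
    norm_le_rhoK_two_mul A hj hm
  have hlimsup : limsup (rhoK A) atTop = ‖complexify (A i₀)‖ := by
    refine limsup_eq_of_eventually_le_of_frequently_ge
      (eventually_atTop.2 ⟨1, fun k hk => hle k (by omega)⟩) (frequently_atTop.2 fun N => ?_)
    exact ⟨2 * (N + 1), by omega, hge _ N.succ_ne_zero⟩
  exact ⟨hlimsup, hlimsup.trans (le_antisymm (hge 1 one_ne_zero) (hle 2 two_ne_zero))⟩

theorem stmt_5 (d n : ℕ) (hd : 0 < d) (hn : 0 < n)
    (A : Fin n → Matrix (Fin d) (Fin d) ℝ) (i₀ : Fin n)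
    (hmax : ∀ i, Real.sqrt (specRad (A i * (A i)ᵀ)) ≤ Real.sqrt (specRad (A i₀ * (A i₀)ᵀ)))
    (htrans : ∃ j, A j = (A i₀)ᵀ) :
    Filter.limsup (rhoK A) Filter.atTop = Real.sqrt (specRad (A i₀ * (A i₀)ᵀ)) ∧
    Filter.limsup (rhoK A) Filter.atTop = rhoK A 2 :=
  stmt_5_general d n A i₀ hmax htrans
end

section
/- The spectral radius of Ĥ^{(N)} = A^{(1)}⋯A^{(N)} satisfies (3^N − N − 1)/N ≤ ρ(Ĥ^{(N)}) ≤ 3^N − 2. -/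
open Matrix BigOperators

/-- `Amat N k` is the matrix `I + S^(k)` (0-indexed `k`): row `k` of `S^(k)` is `2`
everywhere except `0` on the diagonal, and all other rows of `S^(k)` are zero. -/
def Amat (N : ℕ) (k : ℕ) : Matrix (Fin N) (Fin N) ℝ :=
  fun i j => (if i = j then 1 else 0) + (if (i : ℕ) = k ∧ (j : ℕ) ≠ k then 2 else 0)

/-- The ordered product `Ĥ^(N) = A^(1) A^(2) ⋯ A^(N)`. -/
noncomputable def Hhat (N : ℕ) : Matrix (Fin N) (Fin N) ℝ :=
  ((List.range N).map (Amat N)).prod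

/-!
Right multiplication by `Amat N m` adds twice column `m` to every other column. Hence the
prefix products `A⁽⁰⁾ ⋯ A⁽ᵐ⁻¹⁾` stay entrywise nonnegative, keep the identity rows `i ≥ m`,
have column sums `3^m - 2·3^j` for `j < m` and `3^m` otherwise, and their trace grows by
`2(3^m - 1)` per step. So `Ĥ` has trace `3^N - N - 1` and column sums at most `3^N - 2`.
The trace is the sum of the `N` complex eigenvalues, which gives the lower bound; Gershgorin's
theorem for the transpose bounds every eigenvalue by the largest column sum.
-/

namespace Matrix

variable {n K : Type*} [Fintype n] [DecidableEq n] [NormedField K]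

theorem norm_le_of_mem_spectrum_of_sum_col_le {A : Matrix n n K} {z : K}
    (hz : z ∈ spectrum K A) {B : ℝ} (hB : ∀ j, ∑ i, ‖A i j‖ ≤ B) : ‖z‖ ≤ B := by
  have hzT : Module.End.HasEigenvalue (toLin' Aᵀ) z := by
    rwa [Module.End.hasEigenvalue_iff_mem_spectrum, spectrum_toLin',
      mem_spectrum_iff_isRoot_charpoly, charpoly_transpose, ← mem_spectrum_iff_isRoot_charpoly]
  obtain ⟨k, hk⟩ := eigenvalue_mem_ball hzT
  rw [mem_closedBall_iff_norm'] at hk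
  calc ‖z‖ ≤ ‖A k k‖ + ‖A k k - z‖ := norm_le_insert _ _
    _ ≤ ‖A k k‖ + ∑ i ∈ Finset.univ.erase k, ‖A i k‖ := by
        gcongr; simpa only [transpose_apply] using hk
    _ = ∑ i, ‖A i k‖ := Finset.add_sum_erase _ (fun i => ‖A i k‖) (Finset.mem_univ k)
    _ ≤ B := hB k

theorem norm_trace_le_card_mul [IsAlgClosed K] {A : Matrix n n K} {r : ℝ}
    (hr : ∀ z ∈ spectrum K A, ‖z‖ ≤ r) : ‖A.trace‖ ≤ Fintype.card n * r := by
  have hroots : ∀ x ∈ A.charpoly.roots.map (‖·‖), x ≤ r :=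
    Multiset.forall_mem_map_iff.mpr fun z hz =>
      hr z (mem_spectrum_iff_isRoot_charpoly.mpr (Polynomial.isRoot_of_mem_roots hz))
  calc ‖A.trace‖ ≤ (A.charpoly.roots.map (‖·‖)).sum := by
        rw [trace_eq_sum_roots_charpoly]; exact norm_multiset_sum_le _
    _ ≤ Fintype.card n * r := by
        simpa [IsAlgClosed.card_roots_eq_natDegree, charpoly_natDegree_eq_dim] using
          Multiset.sum_le_card_nsmul _ r hroots

end Matrix

section specRad

variable {d : ℕ} (M : Matrix (Fin d) (Fin d) ℝ)

theorem specRad_le_of_sum_col_le {B : ℝ} (hB0 : 0 ≤ B) (hB : ∀ j, ∑ i, |M i j| ≤ B) :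
    specRad M ≤ B := by
  refine Real.sSup_le ?_ hB0
  rintro _ ⟨z, hz, rfl⟩
  exact norm_le_of_mem_spectrum_of_sum_col_le hz (by simpa [Complex.norm_real] using hB)

theorem abs_trace_le_mul_specRad : |M.trace| ≤ d * specRad M := by
  have hbdd : BddAbove ((fun z : ℂ => ‖z‖) '' spectrum ℂ (M.map Complex.ofReal)) :=
    ((finite_spectrum _).image _).bddAbove
  have := norm_trace_le_card_mul fun z hz => le_csSup hbdd ⟨z, hz, rfl⟩
  have htrace : (M.map Complex.ofReal).trace = M.trace := by simp [trace]
  rwa [htrace, Complex.norm_real, Real.norm_eq_abs, Fintype.card_fin] at this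

end specRad

section prefixProd

def prefixProd (N m : ℕ) : Matrix (Fin N) (Fin N) ℝ :=
  ((List.range m).map (Amat N)).prod

variable {N : ℕ}

theorem mul_Amat_apply (P : Matrix (Fin N) (Fin N) ℝ) (m i j : Fin N) :
    (P * Amat N m) i j = P i j + if j ≠ m then 2 * P i m else 0 := by
  by_cases hj : j = m
  · simp [mul_apply, Amat, hj]
  · have hj' : (j : ℕ) ≠ m := fun h => hj (Fin.ext h)
    simp [mul_apply, Amat, mul_add, Finset.sum_add_distrib, hj, hj', Fin.val_eq_val, mul_comm]

theorem prefixProd_succ_apply {m : ℕ} (hm : m < N) (i j : Fin N) :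
    prefixProd N (m + 1) i j
      = prefixProd N m i j + if j ≠ ⟨m, hm⟩ then 2 * prefixProd N m i ⟨m, hm⟩ else 0 := by
  rw [prefixProd, List.range_succ, List.map_append, List.prod_append, List.map_singleton,
    List.prod_singleton]
  exact mul_Amat_apply _ ⟨m, hm⟩ i j

theorem prefixProd_nonneg {m : ℕ} (hm : m ≤ N) (i j : Fin N) : 0 ≤ prefixProd N m i j := by
  induction m generalizing j with
  | zero => by_cases h : i = j <;> simp [prefixProd, one_apply, h]
  | succ m ih =>
    rw [prefixProd_succ_apply hm]
    have := ih (by omega) j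
    have := ih (by omega) ⟨m, hm⟩
    split_ifs <;> positivity

theorem prefixProd_apply_of_le {m : ℕ} (hm : m ≤ N) {i : Fin N} (hi : m ≤ i) (j : Fin N) :
    prefixProd N m i j = (1 : Matrix (Fin N) (Fin N) ℝ) i j := by
  induction m generalizing j with
  | zero => rfl
  | succ m ih =>
    have hmi : i ≠ ⟨m, hm⟩ := ne_of_gt (Fin.lt_def.mpr hi)
    rw [prefixProd_succ_apply hm, ih (by omega) (by omega), ih (by omega) (by omega),
      one_apply_ne hmi]
    simp

theorem sum_prefixProd_apply {m : ℕ} (hm : m ≤ N) (j : Fin N) :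
    ∑ i, prefixProd N m i j = if (j : ℕ) < m then 3 ^ m - 2 * 3 ^ (j : ℕ) else 3 ^ m := by
  induction m generalizing j with
  | zero => simp [prefixProd, one_apply]
  | succ m ih =>
    simp only [prefixProd_succ_apply hm, Finset.sum_add_distrib]
    by_cases hj : j = ⟨m, hm⟩
    · subst hj
      simp only [ih (by omega) ⟨m, hm⟩, lt_self_iff_false, ↓reduceIte, ne_eq,
        not_true_eq_false, Finset.sum_const_zero, add_zero, lt_add_iff_pos_right,
        Order.lt_one_iff, pow_succ]
      ring
    · have hj' : (j : ℕ) ≠ m := fun h => hj (Fin.ext h)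
      simp only [if_pos hj, ← Finset.mul_sum, ih (by omega), lt_irrefl, if_false]
      split_ifs <;> first | omega | ring

theorem trace_prefixProd {m : ℕ} (hm : m ≤ N) :
    (prefixProd N m).trace = 3 ^ m + N - 2 * m - 1 := by
  induction m with
  | zero => simp [prefixProd]
  | succ m ih =>
    have hstep : (prefixProd N (m + 1)).trace = (prefixProd N m).trace
        + 2 * (∑ i, prefixProd N m i ⟨m, hm⟩ - prefixProd N m ⟨m, hm⟩ ⟨m, hm⟩) := by
      simp only [trace, diag, prefixProd_succ_apply hm, Finset.sum_add_distrib,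
        ← Finset.sum_filter, Finset.filter_ne', Finset.sum_erase_eq_sub (Finset.mem_univ _),
        ← Finset.mul_sum, mul_sub]
    rw [hstep, ih (by omega), sum_prefixProd_apply (by omega),
      prefixProd_apply_of_le (i := ⟨m, hm⟩) (by omega) le_rfl]
    simp only [lt_self_iff_false, ↓reduceIte, one_apply_eq, pow_succ, Nat.cast_add, Nat.cast_one]
    ring

theorem Hhat_eq_prefixProd : Hhat N = prefixProd N N := rfl

theorem trace_Hhat : (Hhat N).trace = 3 ^ N - N - 1 := by
  rw [Hhat_eq_prefixProd, trace_prefixProd le_rfl]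
  ring

theorem sum_abs_Hhat_apply_le (j : Fin N) : ∑ i, |Hhat N i j| ≤ 3 ^ N - 2 := by
  simp only [Hhat_eq_prefixProd, abs_of_nonneg (prefixProd_nonneg le_rfl _ _),
    sum_prefixProd_apply le_rfl, if_pos j.isLt]
  have : (1 : ℝ) ≤ 3 ^ (j : ℕ) := one_le_pow₀ (by norm_num)
  linarith

end prefixProd

theorem stmt_14 (N : ℕ) (hN : 0 < N) :
    ((3 : ℝ) ^ N - N - 1) / N ≤ specRad (Hhat N) ∧ specRad (Hhat N) ≤ 3 ^ N - 2 := by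
  constructor
  · rw [div_le_iff₀ (by exact_mod_cast hN), mul_comm, ← trace_Hhat]
    exact (le_abs_self _).trans (abs_trace_le_mul_specRad _)
  · have : (3 : ℝ) ≤ 3 ^ N := le_self_pow₀ (by norm_num) hN.ne'
    exact specRad_le_of_sum_col_le _ (by linarith) sum_abs_Hhat_apply_le
end
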